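/- arXiv:2604.15884 — 3 statements merged into one kernel-verified Lean document; each statement's English description precedes it below -/
import Mathlib

section
/- Let (Ω,ℙ) be a probability space, d ≥ 1, M > 0, C > 0, α ∈ (0,1]. Let a : Ω → ℝ^d be a random vector with |a(ω)| ≤ M almost surely, satisfying: for every ε ∈ (0,1) and every unit vector σ ∈ ℝ^d, ℙ({ω : |a(ω)·σ| < ε}) ≤ C ε^α. Then there exists a constant κ > 0, depending only on C, α and M, such that for every ξ ∈ ℝ^d with |ξ| ≥ 1, 𝔼[ 1 / (1 + 4π² |a·ξ|²) ] ≤ κ |ξ|^{−α}. -/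
open MeasureTheory Real

set_option maxHeartbeats 1000000

/-- the key Fourier multiplier estimate
`E[1/(1 + 4π²|a·ξ|²)] ≤ κ |ξ|^{-α}` for `|ξ| ≥ 1`, under the non-degeneracy
condition on the random vector `a`. -/
theorem stmt_9 (d : ℕ) (hd : 1 ≤ d) (M C : ℝ) (hM : 0 < M) (hC : 0 < C)
    (α : ℝ) (hα : α ∈ Set.Ioc (0 : ℝ) 1) :
    ∃ κ > (0 : ℝ),
      ∀ (Ω : Type) [MeasurableSpace Ω] (P : Measure Ω) [IsProbabilityMeasure P],
      ∀ a : Ω → EuclideanSpace ℝ (Fin d),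
        Measurable a →
        (∀ᵐ ω ∂P, ‖a ω‖ ≤ M) →
        (∀ (σ : EuclideanSpace ℝ (Fin d)) (ε : ℝ), ‖σ‖ = 1 → 0 < ε → ε < 1 →
          P {ω | |(inner ℝ (a ω) σ : ℝ)| < ε} ≤ ENNReal.ofReal (C * ε ^ α)) →
        ∀ ξ : EuclideanSpace ℝ (Fin d), 1 ≤ ‖ξ‖ →
          (∫ ω, 1 / (1 + 4 * Real.pi ^ 2 * (inner ℝ (a ω) ξ : ℝ) ^ 2) ∂P) ≤
            κ * ‖ξ‖ ^ (-α) := by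
  obtain ⟨hα0, hα1⟩ := hα
  set C₁ : ℝ := max C 1 with hC₁def
  have hC₁1 : (1:ℝ) ≤ C₁ := le_max_right _ _
  have hC₁0 : (0:ℝ) < C₁ := lt_of_lt_of_le one_pos hC₁1
  refine ⟨2 * C₁, by positivity, ?_⟩
  intro Ω _ P _ a ha _hbd hnd ξ hξ
  have hR0 : (0:ℝ) < ‖ξ‖ := lt_of_lt_of_le one_pos hξ
  set u : Ω → ℝ := fun ω => (inner ℝ (a ω) ξ : ℝ) with hu
  have hu_meas : Measurable u := by
    have hc : Continuous fun v : EuclideanSpace ℝ (Fin d) => (inner ℝ v ξ : ℝ) :=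
      continuous_id.inner continuous_const
    exact hc.measurable.comp ha
  set f : Ω → ℝ := fun ω => 1 / (1 + 4 * Real.pi ^ 2 * (u ω) ^ 2) with hf
  have hden : ∀ ω, (0:ℝ) < 1 + 4 * Real.pi ^ 2 * (u ω) ^ 2 := by
    intro ω; positivity
  have hf_nonneg : ∀ ω, 0 ≤ f ω := fun ω => by positivity
  have hf_le_one : ∀ ω, f ω ≤ 1 := by
    intro ω
    rw [hf, div_le_one (hden ω)]
    nlinarith [sq_nonneg (u ω), sq_nonneg Real.pi]
  have hf_meas : Measurable f := by
    apply Measurable.div measurable_const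
    exact (measurable_const.add (measurable_const.mul (hu_meas.pow measurable_const)))
  have hf_int : Integrable f P := by
    refine (integrable_const (1:ℝ)).mono' hf_meas.aestronglyMeasurable ?_
    filter_upwards with ω
    rw [Real.norm_eq_abs, abs_of_nonneg (hf_nonneg ω)]
    exact hf_le_one ω
  -- the unit vector
  set σ : EuclideanSpace ℝ (Fin d) := ‖ξ‖⁻¹ • ξ with hσdef
  have hσ : ‖σ‖ = 1 := by
    rw [hσdef, norm_smul, norm_inv, norm_norm, inv_mul_cancel₀ hR0.ne']
  have hinner : ∀ ω, (inner ℝ (a ω) σ : ℝ) = ‖ξ‖⁻¹ * u ω := by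
    intro ω; rw [hσdef, real_inner_smul_right]
  -- strengthened nondegeneracy for all ε > 0
  have hnd' : ∀ ε : ℝ, 0 < ε →
      P {ω | |(inner ℝ (a ω) σ : ℝ)| < ε} ≤ ENNReal.ofReal (C₁ * ε ^ α) := by
    intro ε hε
    rcases lt_or_ge ε 1 with h1 | h1
    · refine le_trans (hnd σ ε hσ hε h1) (ENNReal.ofReal_le_ofReal ?_)
      have : (0:ℝ) ≤ ε ^ α := (Real.rpow_pos_of_pos hε α).le
      nlinarith [le_max_left C 1]
    · refine le_trans prob_le_one ?_
      rw [← ENNReal.ofReal_one]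
      apply ENNReal.ofReal_le_ofReal
      have h2 : (1:ℝ) ≤ ε ^ α := Real.one_le_rpow h1 hα0.le
      nlinarith
  -- key tail bound
  have key : ∀ t ∈ Set.Ioc (0:ℝ) 1,
      P {ω | t < f ω} ≤ ENNReal.ofReal (C₁ * ‖ξ‖ ^ (-α) * t ^ (-α / 2)) := by
    intro t ⟨ht0, ht1⟩
    set ε : ℝ := t ^ (-(1:ℝ)/2) / (2 * Real.pi * ‖ξ‖) with hεdef
    have hs0 : (0:ℝ) < t ^ (-(1:ℝ)/2) := Real.rpow_pos_of_pos ht0 _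
    have hε0 : 0 < ε := by
      apply div_pos hs0; positivity
    have hsub : {ω | t < f ω} ⊆ {ω | |(inner ℝ (a ω) σ : ℝ)| < ε} := by
      intro ω hω
      simp only [Set.mem_setOf_eq] at hω ⊢
      have h1 : (1 + 4 * Real.pi ^ 2 * (u ω) ^ 2) * t < 1 := by
        rw [hf] at hω
        calc (1 + 4 * Real.pi ^ 2 * (u ω) ^ 2) * t
            < (1 + 4 * Real.pi ^ 2 * (u ω) ^ 2) * (1 / (1 + 4 * Real.pi ^ 2 * (u ω) ^ 2)) := by
              apply mul_lt_mul_of_pos_left hω (hden ω)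
          _ = 1 := mul_one_div_cancel (hden ω).ne'
      have hsq' : t ^ (-(1:ℝ)/2) * t ^ (-(1:ℝ)/2) = t⁻¹ := by
        rw [← Real.rpow_add ht0, show (-(1:ℝ)/2 + -(1:ℝ)/2) = -1 by ring, Real.rpow_neg_one]
      have h5 : (2 * Real.pi * |u ω|) * (2 * Real.pi * |u ω|)
          < t ^ (-(1:ℝ)/2) * t ^ (-(1:ℝ)/2) := by
        rw [hsq', inv_eq_one_div, lt_div_iff₀ ht0]
        nlinarith [sq_abs (u ω), Real.pi_pos, ht0, sq_nonneg (u ω),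
          mul_pos (mul_pos (mul_pos two_pos Real.pi_pos) Real.pi_pos) ht0]
      have habs : 2 * Real.pi * |u ω| < t ^ (-(1:ℝ)/2) := by
        nlinarith [abs_nonneg (u ω), Real.pi_pos, hs0, h5]
      rw [hinner ω, abs_mul, abs_inv, abs_of_pos hR0, hεdef,
        show t ^ (-(1:ℝ)/2) / (2 * Real.pi * ‖ξ‖)
            = ‖ξ‖⁻¹ * (t ^ (-(1:ℝ)/2) / (2 * Real.pi)) by
          rw [div_eq_mul_inv, div_eq_mul_inv, mul_inv]; ring]
      refine mul_lt_mul_of_pos_left ?_ (inv_pos.mpr hR0)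
      rw [lt_div_iff₀ (by positivity)]
      linarith [habs]
    refine le_trans (measure_mono hsub) (le_trans (hnd' ε hε0) (ENNReal.ofReal_le_ofReal ?_))
    -- C₁ ε^α ≤ C₁ ‖ξ‖^(-α) t^(-α/2)
    have hεle : ε ≤ t ^ (-(1:ℝ)/2) / ‖ξ‖ := by
      rw [hεdef]
      apply div_le_div_of_nonneg_left hs0.le hR0
      nlinarith [Real.pi_gt_three, hR0]
    have h2 : ε ^ α ≤ (t ^ (-(1:ℝ)/2) / ‖ξ‖) ^ α :=
      Real.rpow_le_rpow hε0.le hεle hα0.le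
    have h3 : (t ^ (-(1:ℝ)/2) / ‖ξ‖) ^ α = t ^ (-α/2) * ‖ξ‖ ^ (-α) := by
      rw [Real.div_rpow hs0.le hR0.le, ← Real.rpow_mul ht0.le,
        show (-(1:ℝ)/2*α) = -α/2 by ring, Real.rpow_neg hR0.le, div_eq_mul_inv]
    calc C₁ * ε ^ α ≤ C₁ * (t ^ (-α/2) * ‖ξ‖ ^ (-α)) := by
          rw [← h3]; exact mul_le_mul_of_nonneg_left h2 hC₁0.le
      _ = C₁ * ‖ξ‖ ^ (-α) * t ^ (-α / 2) := by ring
  -- layer cake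
  have hlayer : ∫ ω, f ω ∂P = (∫⁻ t in Set.Ioi (0:ℝ), P {ω | t < f ω}).toReal := by
    rw [integral_eq_lintegral_of_nonneg_ae (Filter.Eventually.of_forall hf_nonneg)
        hf_meas.aestronglyMeasurable,
      lintegral_eq_lintegral_meas_lt P (Filter.Eventually.of_forall hf_nonneg)
        hf_meas.aemeasurable]
  have hsplit : (∫⁻ t in Set.Ioi (0:ℝ), P {ω | t < f ω})
      = (∫⁻ t in Set.Ioc (0:ℝ) 1, P {ω | t < f ω})
        + ∫⁻ t in Set.Ioi (1:ℝ), P {ω | t < f ω} := by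
    rw [← Set.Ioc_union_Ioi_eq_Ioi (zero_le_one (α := ℝ)),
      lintegral_union measurableSet_Ioi Set.Ioc_disjoint_Ioi_same]
  have hIoi1 : (∫⁻ t in Set.Ioi (1:ℝ), P {ω | t < f ω}) = 0 := by
    rw [setLIntegral_congr_fun measurableSet_Ioi
      (fun t (ht : 1 < t) => ?_), lintegral_zero]
    have : {ω | t < f ω} = ∅ := by
      ext ω; simp only [Set.mem_setOf_eq, Set.mem_empty_iff_false, iff_false, not_lt]
      exact le_trans (hf_le_one ω) ht.le
    simp [this]
  -- integrability of the majorant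
  have hmaj_int : IntegrableOn (fun t : ℝ => C₁ * ‖ξ‖ ^ (-α) * t ^ (-α/2))
      (Set.Ioc (0:ℝ) 1) := by
    have h1 : IntervalIntegrable (fun t : ℝ => t ^ (-α/2)) volume 0 1 :=
      intervalIntegral.intervalIntegrable_rpow' (by linarith)
    rw [intervalIntegrable_iff, Set.uIoc_of_le zero_le_one] at h1
    exact h1.const_mul _
  have hmaj_nn : 0 ≤ᵐ[volume.restrict (Set.Ioc (0:ℝ) 1)]
      (fun t : ℝ => C₁ * ‖ξ‖ ^ (-α) * t ^ (-α/2)) := by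
    refine (ae_restrict_iff' measurableSet_Ioc).mpr (Filter.Eventually.of_forall ?_)
    intro t ht
    have := Real.rpow_nonneg ht.1.le (-α/2)
    positivity
  have hval : ∫ t in Set.Ioc (0:ℝ) 1, C₁ * ‖ξ‖ ^ (-α) * t ^ (-α/2)
      = C₁ * ‖ξ‖ ^ (-α) * (2 / (2 - α)) := by
    rw [integral_const_mul, ← intervalIntegral.integral_of_le zero_le_one,
      integral_rpow (Or.inl (by linarith))]
    rw [Real.one_rpow, Real.zero_rpow (by linarith)]
    congr 1
    field_simp
    ring
  have hIoc : (∫⁻ t in Set.Ioc (0:ℝ) 1, P {ω | t < f ω})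
      ≤ ENNReal.ofReal (C₁ * ‖ξ‖ ^ (-α) * (2 / (2 - α))) := by
    calc (∫⁻ t in Set.Ioc (0:ℝ) 1, P {ω | t < f ω})
        ≤ ∫⁻ t in Set.Ioc (0:ℝ) 1, ENNReal.ofReal (C₁ * ‖ξ‖ ^ (-α) * t ^ (-α/2)) := by
          refine setLIntegral_mono (by fun_prop) key
      _ = ENNReal.ofReal (∫ t in Set.Ioc (0:ℝ) 1, C₁ * ‖ξ‖ ^ (-α) * t ^ (-α/2)) :=
          (ofReal_integral_eq_lintegral_ofReal hmaj_int hmaj_nn).symm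
      _ = ENNReal.ofReal (C₁ * ‖ξ‖ ^ (-α) * (2 / (2 - α))) := by rw [hval]
  -- conclusion
  have h2α : (0:ℝ) < 2 - α := by linarith
  have hfrac : 2 / (2 - α) ≤ 2 := by
    rw [div_le_iff₀ h2α]; nlinarith
  have hcnn : (0:ℝ) ≤ C₁ * ‖ξ‖ ^ (-α) := by positivity
  show (∫ ω, f ω ∂P) ≤ 2 * C₁ * ‖ξ‖ ^ (-α)
  calc (∫ ω, f ω ∂P) = (∫⁻ t in Set.Ioi (0:ℝ), P {ω | t < f ω}).toReal := hlayer
    _ = (∫⁻ t in Set.Ioc (0:ℝ) 1, P {ω | t < f ω}).toReal := by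
        rw [hsplit, hIoi1, add_zero]
    _ ≤ (ENNReal.ofReal (C₁ * ‖ξ‖ ^ (-α) * (2 / (2 - α)))).toReal :=
        ENNReal.toReal_mono ENNReal.ofReal_ne_top hIoc
    _ = C₁ * ‖ξ‖ ^ (-α) * (2 / (2 - α)) :=
        ENNReal.toReal_ofReal (mul_nonneg hcnn (div_nonneg (by norm_num) h2α.le))
    _ ≤ C₁ * ‖ξ‖ ^ (-α) * 2 := mul_le_mul_of_nonneg_left hfrac hcnn
    _ = 2 * C₁ * ‖ξ‖ ^ (-α) := by ring
end

section
/- Let H be a (real or complex) Hilbert space and let Θ : H → H be a bounded self-adjoint linear operator. Then for every w ∈ H, every integer j ≥ 1 and every integer k with 1 ≤ k ≤ j, one has ‖Θ^k w‖ ≤ ‖Θ^j w‖^{k/j} · ‖w‖^{1 − k/j}. -/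
/-- Monotonicity from successor steps, restricted to a window. -/
private lemma stmt10_mono (d : ℕ → ℝ) (j : ℕ)
    (hd : ∀ i, i + 2 ≤ j → d i ≤ d (i + 1)) :
    ∀ i m, i ≤ m → m + 1 ≤ j → d i ≤ d m := by
  intro i m him hmj
  induction m with
  | zero => simp [Nat.le_zero.mp him]
  | succ n ih =>
    rcases Nat.lt_or_ge i (n+1) with h | h
    · exact le_trans (ih (Nat.lt_succ_iff.mp h) (by omega)) (hd n (by omega))
    · have : i = n + 1 := le_antisymm him h
      simp [this]

/-- Chebyshev-type sum inequality for monotone increments. -/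
private lemma stmt10_sum (d : ℕ → ℝ) (j k : ℕ) (hkj : k ≤ j)
    (hd : ∀ i, i + 2 ≤ j → d i ≤ d (i + 1)) :
    (j : ℝ) * ∑ i ∈ Finset.range k, d i ≤ (k : ℝ) * ∑ i ∈ Finset.range j, d i := by
  have hsplit : ∑ i ∈ Finset.range j, d i
      = ∑ i ∈ Finset.range k, d i + ∑ i ∈ Finset.Ico k j, d i := by
    rw [Finset.range_eq_Ico, Finset.range_eq_Ico]
    exact (Finset.sum_Ico_consecutive d (Nat.zero_le k) hkj).symm
  have hstep : ((j - k : ℕ) : ℝ) * ∑ i ∈ Finset.range k, d i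
      ≤ (k : ℝ) * ∑ i ∈ Finset.Ico k j, d i := by
    calc ((j - k : ℕ) : ℝ) * ∑ i ∈ Finset.range k, d i
        = ∑ i ∈ Finset.range k, ∑ _m ∈ Finset.Ico k j, d i := by
          rw [Finset.mul_sum]
          refine Finset.sum_congr rfl fun i _ => ?_
          simp [Finset.sum_const, Nat.card_Ico, mul_comm]
      _ ≤ ∑ i ∈ Finset.range k, ∑ m ∈ Finset.Ico k j, d m := by
          apply Finset.sum_le_sum
          intro i hi
          apply Finset.sum_le_sum
          intro m hm
          have hi' : i < k := Finset.mem_range.mp hi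
          have hm' := Finset.mem_Ico.mp hm
          exact stmt10_mono d j hd i m (by omega) (by omega)
      _ = (k : ℝ) * ∑ m ∈ Finset.Ico k j, d m := by
          simp [Finset.sum_const, mul_comm]
  have hcast : (j : ℝ) = (k : ℝ) + ((j - k : ℕ) : ℝ) := by
    have : ((j - k : ℕ) : ℝ) = (j : ℝ) - (k : ℝ) := Nat.cast_sub hkj
    linarith
  rw [hsplit, hcast]
  ring_nf
  nlinarith [hstep]

/-- Key inequality: `‖Θ u‖² ≤ ‖Θ² u‖ ‖u‖` for self-adjoint `Θ`. -/
private lemma stmt10_key {𝕜 : Type*} [RCLike 𝕜] {H : Type*} [NormedAddCommGroup H]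
    [InnerProductSpace 𝕜 H] (Θ : H →L[𝕜] H)
    (hsa : ∀ u v : H, (inner 𝕜 (Θ u) v : 𝕜) = inner 𝕜 u (Θ v)) (u : H) :
    ‖Θ u‖ ^ 2 ≤ ‖Θ (Θ u)‖ * ‖u‖ := by
  have h1 : (‖Θ u‖ : ℝ) ^ 2 = RCLike.re (inner 𝕜 (Θ u) (Θ u) : 𝕜) := by
    rw [inner_self_eq_norm_sq]
  have h2 : (inner 𝕜 (Θ u) (Θ u) : 𝕜) = inner 𝕜 u (Θ (Θ u)) := hsa u (Θ u)
  calc ‖Θ u‖ ^ 2 = RCLike.re (inner 𝕜 u (Θ (Θ u)) : 𝕜) := by rw [h1, h2]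
    _ ≤ ‖(inner 𝕜 u (Θ (Θ u)) : 𝕜)‖ := RCLike.re_le_norm _
    _ ≤ ‖u‖ * ‖Θ (Θ u)‖ := norm_inner_le_norm _ _
    _ = ‖Θ (Θ u)‖ * ‖u‖ := mul_comm _ _

/-- interpolation bounds for the iterates of a bounded self-adjoint
operator on a Hilbert space: `‖Θ^k w‖ ≤ ‖Θ^j w‖^(k/j) * ‖w‖^(1-k/j)` for `1 ≤ k ≤ j`. -/
theorem stmt_10 {𝕜 : Type*} [RCLike 𝕜] {H : Type*} [NormedAddCommGroup H]
    [InnerProductSpace 𝕜 H] [CompleteSpace H] (Θ : H →L[𝕜] H)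
    (hsa : ∀ u v : H, (inner 𝕜 (Θ u) v : 𝕜) = inner 𝕜 u (Θ v)) :
    ∀ (w : H) (j k : ℕ), 1 ≤ k → k ≤ j →
      ‖(Θ ^ k) w‖ ≤ ‖(Θ ^ j) w‖ ^ ((k : ℝ) / (j : ℝ)) * ‖w‖ ^ (1 - (k : ℝ) / (j : ℝ)) := by
  intro w j k hk1 hkj
  have hj1 : 1 ≤ j := le_trans hk1 hkj
  set a : ℕ → ℝ := fun m => ‖(Θ ^ m) w‖ with ha
  have happ : ∀ m : ℕ, (Θ ^ (m + 1)) w = Θ ((Θ ^ m) w) := by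
    intro m
    rw [pow_succ']
    rfl
  have key : ∀ m : ℕ, a (m + 1) ^ 2 ≤ a (m + 2) * a m := by
    intro m
    have := stmt10_key Θ hsa ((Θ ^ m) w)
    simp only [ha]
    rw [show m + 2 = (m + 1) + 1 from rfl, happ (m + 1), happ m]
    exact this
  have hanonneg : ∀ m, 0 ≤ a m := fun m => norm_nonneg _
  rcases eq_or_lt_of_le (hanonneg j) with hzero | hpos
  · -- a j = 0 : everything collapses
    have hz : ∀ i m, m + i = j → 1 ≤ m → a m = 0 := by
      intro i
      induction i with
      | zero => intro m hm _; rw [Nat.add_zero] at hm; rw [hm]; exact hzero.symm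
      | succ n ih =>
        intro m hm hm1
        have h1 : a (m + 1) = 0 := ih (m + 1) (by omega) (by omega)
        obtain ⟨p, rfl⟩ := Nat.exists_eq_add_of_le hm1
        have := key p
        have h2 : a (1 + p) ^ 2 ≤ 0 := by
          rw [show p + 1 = 1 + p by ring] at this
          rw [show 1 + p + 1 = p + 2 by ring] at h1
          nlinarith [hanonneg p, this, h1]
        nlinarith [hanonneg (1 + p)]
    have hak : a k = 0 := hz (j - k) k (by omega) hk1
    have hdiv : (0 : ℝ) < (k : ℝ) / (j : ℝ) := by
      apply div_pos <;> exact_mod_cast by omega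
    rw [show ‖(Θ ^ k) w‖ = a k from rfl, hak,
      show ‖(Θ ^ j) w‖ = a j from rfl, ← hzero,
      Real.zero_rpow (ne_of_gt hdiv), zero_mul]
  · -- a j > 0
    have hpos' : ∀ i, i ≤ j → 0 < a i := by
      intro i hij
      rcases eq_or_lt_of_le (hanonneg i) with h0 | h
      · exfalso
        have hΘi : (Θ ^ i) w = 0 := by
          have := h0.symm; rwa [ha, norm_eq_zero] at this
        have : (Θ ^ j) w = 0 := by
          have hj : j = (j - i) + i := by omega
          rw [hj, pow_add, ContinuousLinearMap.mul_apply, hΘi, map_zero]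
        rw [ha] at hpos
        simp [this] at hpos
      · exact h
    set b : ℕ → ℝ := fun i => Real.log (a i) with hb
    set d : ℕ → ℝ := fun i => b (i + 1) - b i with hd
    have hdmono : ∀ i, i + 2 ≤ j → d i ≤ d (i + 1) := by
      intro i hij
      have h0 := hpos' i (by omega)
      have h1 := hpos' (i + 1) (by omega)
      have h2 := hpos' (i + 2) (by omega)
      have hkey := key i
      have hlog : Real.log (a (i + 1) ^ 2) ≤ Real.log (a (i + 2) * a i) :=
        Real.log_le_log (by positivity) hkey
      rw [Real.log_pow, Real.log_mul (ne_of_gt h2) (ne_of_gt h0)] at hlog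
      simp only [hd, hb]
      push_cast at hlog
      linarith
    have hsum := stmt10_sum d j k hkj hdmono
    have htel : ∀ n, ∑ i ∈ Finset.range n, d i = b n - b 0 := by
      intro n
      exact Finset.sum_range_sub b n
    rw [htel k, htel j] at hsum
    have hjpos : (0 : ℝ) < (j : ℝ) := by exact_mod_cast by omega
    have hbk : b k ≤ ((k : ℝ) / (j : ℝ)) * b j + (1 - (k : ℝ) / (j : ℝ)) * b 0 := by
      have h2 : (j : ℝ) * b k ≤ (k : ℝ) * b j + ((j : ℝ) - k) * b 0 := by nlinarith [hsum]
      have h3 : b k ≤ ((k : ℝ) * b j + ((j : ℝ) - k) * b 0) / j := by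
        rw [le_div_iff₀ hjpos]; nlinarith [h2]
      calc b k ≤ _ := h3
        _ = ((k : ℝ) / (j : ℝ)) * b j + (1 - (k : ℝ) / (j : ℝ)) * b 0 := by
            field_simp
    have hexp : a k ≤ Real.exp (((k : ℝ) / (j : ℝ)) * b j + (1 - (k : ℝ) / (j : ℝ)) * b 0) := by
      calc a k = Real.exp (b k) := (Real.exp_log (hpos' k hkj)).symm
        _ ≤ _ := Real.exp_le_exp.mpr hbk
    have hrw : Real.exp (((k : ℝ) / (j : ℝ)) * b j + (1 - (k : ℝ) / (j : ℝ)) * b 0)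
        = a j ^ ((k : ℝ) / (j : ℝ)) * a 0 ^ (1 - (k : ℝ) / (j : ℝ)) := by
      rw [Real.exp_add, Real.rpow_def_of_pos hpos, Real.rpow_def_of_pos (hpos' 0 (by omega))]
      ring_nf
      rfl
    have ha0 : a 0 = ‖w‖ := by simp [ha]
    calc ‖(Θ ^ k) w‖ = a k := rfl
      _ ≤ _ := hexp
      _ = a j ^ ((k : ℝ) / (j : ℝ)) * a 0 ^ (1 - (k : ℝ) / (j : ℝ)) := hrw
      _ = ‖(Θ ^ j) w‖ ^ ((k : ℝ) / (j : ℝ)) * ‖w‖ ^ (1 - (k : ℝ) / (j : ℝ)) := by rw [ha0]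
end

section
/- Fix an integer d ≥ 1 and M ∈ (0,1]. Let a⁽¹⁾, …, a⁽ᵈ⁾ : ℝ^d → ℝ^d be C² vector fields with ‖a⁽ⁱ⁾‖_{C²_b} := Σ_{|γ|≤2} ‖∂^γ a⁽ⁱ⁾‖_{L^∞} ≤ M, let Φ⁽ⁱ⁾ denote the flow of a⁽ⁱ⁾, fix x₀ ∈ ℝ^d, and for 1 ≤ i ≤ d and 𝐭_i = (t₁,…,t_i) set H⁽ⁱ⁾(𝐭_i) := Φ⁽ⁱ⁾_{t_i} ∘ ⋯ ∘ Φ⁽¹⁾_{t₁}(x₀), H := H⁽ᵈ⁾, x_{𝐭_i} := H⁽ⁱ⁾(𝐭_i), x_{𝐭₀} := x₀; set T_{𝐭₀} := {0} and T_{𝐭_i} := range(dH⁽ⁱ⁾(𝐭_i)) for 1 ≤ i ≤ d−1. Let ε > 0 and 𝐭 ∈ ℝ^d satisfy the quantitative non-degeneracy condition ND_{ε,x₀,𝐭}: dist(a⁽ⁱ⁾(x_{𝐭_{i−1}}), T_{𝐭_{i−1}}) > ε for every i = 1,…,d. Then the differential dH(𝐭) : ℝ^d → ℝ^d is invertible and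 ‖dH(𝐭)^{-1}‖ ≤ ε^{−d} (2^d − 1) e^{M|𝐭|_{ℓ¹}}, where |𝐭|_{ℓ¹} = |t₁| + ⋯ + |t_d|. -/
open MeasureTheory Real

open Set

/-- `Hmap Φ x₀ i 𝐭 = Φ⁽ⁱ⁾_{t_i} ∘ ⋯ ∘ Φ⁽¹⁾_{t₁} (x₀)`. -/
noncomputable def Hmap {d : ℕ}
    (Φ : Fin d → ℝ → EuclideanSpace ℝ (Fin d) → EuclideanSpace ℝ (Fin d))
    (x₀ : EuclideanSpace ℝ (Fin d)) (i : ℕ) (t : EuclideanSpace ℝ (Fin d)) :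
    EuclideanSpace ℝ (Fin d) :=
  (List.range i).foldl (fun x k => if h : k < d then Φ ⟨k, h⟩ (t ⟨k, h⟩) x else x) x₀

/-- The tangent space `T_{𝐭_i} = range (dH⁽ⁱ⁾(𝐭_i))` (for `i = 0` this is `{0}`,
since `Hmap Φ x₀ 0` is constant). -/
noncomputable def tangentSpace {d : ℕ}
    (Φ : Fin d → ℝ → EuclideanSpace ℝ (Fin d) → EuclideanSpace ℝ (Fin d))
    (x₀ : EuclideanSpace ℝ (Fin d)) (i : ℕ) (t : EuclideanSpace ℝ (Fin d)) :
    Submodule ℝ (EuclideanSpace ℝ (Fin d)) :=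
  LinearMap.range (fderiv ℝ (Hmap Φ x₀ i) t).toLinearMap

section auxiliary

variable {E : Type*} [NormedAddCommGroup E] [NormedSpace ℝ E]

theorem my_ode_unique {K : NNReal} {v : E → E} (hv : LipschitzWith K v) {f g : ℝ → E}
    (hf : ∀ s, HasDerivAt f (v (f s)) s) (hg : ∀ s, HasDerivAt g (v (g s)) s)
    (h0 : f 0 = g 0) (s : ℝ) : f s = g s := by
  rcases le_total 0 s with h | h
  · exact ODE_solution_unique (v := fun _ => v) (fun _ => hv)
      (fun r _ => (hf r).continuousAt.continuousWithinAt)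
      (fun r _ => (hf r).hasDerivWithinAt)
      (fun r _ => (hg r).continuousAt.continuousWithinAt)
      (fun r _ => (hg r).hasDerivWithinAt) h0 ⟨h, le_refl s⟩
  · have hF : ∀ r, HasDerivAt (fun u => f (-u)) (-(v (f (-r)))) r := by
      intro r
      simpa [Function.comp_def] using (hf (-r)).scomp r (hasDerivAt_neg r)
    have hG : ∀ r, HasDerivAt (fun u => g (-u)) (-(v (g (-r)))) r := by
      intro r
      simpa [Function.comp_def] using (hg (-r)).scomp r (hasDerivAt_neg r)
    have := ODE_solution_unique (v := fun _ x => -(v x)) (fun _ => hv.neg)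
      (fun r _ => (hF r).continuousAt.continuousWithinAt)
      (fun r _ => (hF r).hasDerivWithinAt)
      (fun r _ => (hG r).continuousAt.continuousWithinAt)
      (fun r _ => (hG r).hasDerivWithinAt) (by simpa using h0)
      (Set.mem_Icc.2 ⟨neg_nonneg.2 h, le_refl (-s)⟩)
    simpa using this

theorem my_gronwall {K : NNReal} {v : E → E} (hv : LipschitzWith K v) {f g : ℝ → E}
    (hf : ∀ s, HasDerivAt f (v (f s)) s) (hg : ∀ s, HasDerivAt g (v (g s)) s)
    (s : ℝ) : dist (f s) (g s) ≤ dist (f 0) (g 0) * Real.exp (K * |s|) := by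
  rcases le_total 0 s with h | h
  · have := dist_le_of_trajectories_ODE (v := fun _ => v) (fun _ => hv)
      (fun r _ => (hf r).continuousAt.continuousWithinAt)
      (fun r _ => (hf r).hasDerivWithinAt)
      (fun r _ => (hg r).continuousAt.continuousWithinAt)
      (fun r _ => (hg r).hasDerivWithinAt) (le_refl (dist (f 0) (g 0)))
      s ⟨h, le_refl s⟩
    rw [abs_of_nonneg h]
    rwa [sub_zero] at this

  · have hF : ∀ r, HasDerivAt (fun u => f (-u)) (-(v (f (-r)))) r := by
      intro r; simpa [Function.comp_def] using (hf (-r)).scomp r (hasDerivAt_neg r)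
    have hG : ∀ r, HasDerivAt (fun u => g (-u)) (-(v (g (-r)))) r := by
      intro r; simpa [Function.comp_def] using (hg (-r)).scomp r (hasDerivAt_neg r)
    have := dist_le_of_trajectories_ODE (v := fun _ x => -(v x)) (fun _ => hv.neg)
      (fun r _ => (hF r).continuousAt.continuousWithinAt)
      (fun r _ => (hF r).hasDerivWithinAt)
      (fun r _ => (hG r).continuousAt.continuousWithinAt)
      (fun r _ => (hG r).hasDerivWithinAt)
      (le_refl (dist (f (-0)) (g (-0))))
      (-s) (Set.mem_Icc.2 ⟨neg_nonneg.2 h, le_refl (-s)⟩)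
    simp only [neg_neg, sub_zero, neg_zero] at this
    rwa [abs_of_nonpos h]



theorem my_lip {f : E → E} {M : ℝ} (hM : 0 ≤ M) (hf : ContDiff ℝ 2 f)
    (hd : ∀ x, ‖iteratedFDeriv ℝ 1 f x‖ ≤ M) : LipschitzWith M.toNNReal f := by
  apply lipschitzWith_of_nnnorm_fderiv_le (hf.differentiable (by norm_num))
  intro x
  have h1 : ‖fderiv ℝ f x‖ ≤ M := by
    rw [show ‖fderiv ℝ f x‖ = ‖iteratedFDeriv ℝ 1 f x‖ by
      rw [← norm_iteratedFDeriv_fderiv (n := 0), norm_iteratedFDeriv_zero]]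
    exact hd x
  rw [← norm_toNNReal]
  exact Real.toNNReal_mono h1

variable {v : E → E} {φ : ℝ → E → E} {M : ℝ}

theorem flow_speed (hD : ∀ s x, HasDerivAt (fun r => φ r x) (v (φ s x)) s)
    (hb : ∀ x, ‖v x‖ ≤ M) (r s : ℝ) (x : E) : ‖φ r x - φ s x‖ ≤ M * |r - s| := by
  have := Convex.norm_image_sub_le_of_norm_hasDerivWithin_le
    (f := fun u => φ u x) (f' := fun u => v (φ u x)) (C := M) (s := uIcc s r)
    (fun u _ => (hD u x).hasDerivWithinAt) (fun u _ => hb _) (convex_uIcc s r)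
    (left_mem_uIcc) (right_mem_uIcc)
  rwa [Real.norm_eq_abs] at this

theorem flow_glaw (hlip : LipschitzWith M.toNNReal v)
    (h0 : ∀ x, φ 0 x = x)
    (hD : ∀ s x, HasDerivAt (fun r => φ r x) (v (φ s x)) s)
    (u s : ℝ) (x : E) : φ (u + s) x = φ u (φ s x) := by
  refine my_ode_unique hlip (f := fun u => φ (u + s) x) (g := fun u => φ u (φ s x))
    ?_ (fun r => hD r _) (by simp [h0]) u
  intro r
  simpa [Function.comp_def] using (hD (r + s) x).scomp r ((hasDerivAt_id r).add_const s)

theorem flow_inv_pt (hlip : LipschitzWith M.toNNReal v)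
    (h0 : ∀ x, φ 0 x = x)
    (hD : ∀ s x, HasDerivAt (fun r => φ r x) (v (φ s x)) s)
    (s : ℝ) (x : E) : φ (-s) (φ s x) = x := by
  have := flow_glaw hlip h0 hD (-s) s x
  rw [neg_add_cancel, h0] at this
  exact this.symm

theorem flow_contract (hM : 0 ≤ M) (hlip : LipschitzWith M.toNNReal v)
    (h0 : ∀ x, φ 0 x = x)
    (hD : ∀ s x, HasDerivAt (fun r => φ r x) (v (φ s x)) s)
    (s : ℝ) (x y : E) : dist (φ s x) (φ s y) ≤ Real.exp (M * |s|) * dist x y := by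
  have := my_gronwall hlip (f := fun r => φ r x) (g := fun r => φ r y)
    (fun r => hD r x) (fun r => hD r y) s
  rw [h0, h0, Real.coe_toNNReal _ hM] at this
  linarith [this]

theorem flow_lip (hM : 0 ≤ M) (hlip : LipschitzWith M.toNNReal v)
    (h0 : ∀ x, φ 0 x = x)
    (hD : ∀ s x, HasDerivAt (fun r => φ r x) (v (φ s x)) s)
    (s : ℝ) : LipschitzWith (Real.exp (M * |s|)).toNNReal (φ s) := by
  apply LipschitzWith.of_dist_le_mul
  intro x y
  rw [Real.coe_toNNReal _ (Real.exp_nonneg _)]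
  exact flow_contract hM hlip h0 hD s x y

theorem flow_fderiv_le (hM : 0 ≤ M) (hlip : LipschitzWith M.toNNReal v)
    (h0 : ∀ x, φ 0 x = x)
    (hD : ∀ s x, HasDerivAt (fun r => φ r x) (v (φ s x)) s)
    (hreg : ∀ s, ContDiff ℝ 2 (φ s))
    (s : ℝ) (x : E) : ‖fderiv ℝ (φ s) x‖ ≤ Real.exp (M * |s|) := by
  have h := (((hreg s).differentiable (by norm_num)) x).hasFDerivAt.le_of_lipschitz
    (flow_lip hM hlip h0 hD s)
  rwa [Real.coe_toNNReal _ (Real.exp_nonneg _)] at h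

theorem flow_push (hlip : LipschitzWith M.toNNReal v)
    (h0 : ∀ x, φ 0 x = x)
    (hD : ∀ s x, HasDerivAt (fun r => φ r x) (v (φ s x)) s)
    (hreg : ∀ s, ContDiff ℝ 2 (φ s))
    (s : ℝ) (x : E) : v (φ s x) = fderiv ℝ (φ s) x (v x) := by
  have hx : HasDerivAt (fun u => φ u x) (v x) 0 := by
    have := hD 0 x; rwa [h0] at this
  have h1 : HasDerivAt (fun u => φ s (φ u x)) (fderiv ℝ (φ s) x (v x)) 0 := by
    have hf : HasFDerivAt (φ s) (fderiv ℝ (φ s) x) ((fun u => φ u x) 0) := by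
      simp only [h0]
      exact (((hreg s).differentiable (by norm_num)) x).hasFDerivAt
    exact hf.comp_hasDerivAt 0 hx
  have h2 : HasDerivAt (fun u => φ (s + u) x) (v (φ s x)) 0 := by
    have := (hD (s + 0) x).scomp 0 ((hasDerivAt_id 0).const_add s)
    simpa [Function.comp_def] using this
  have heq : (fun u => φ s (φ u x)) = fun u => φ (s + u) x := by
    funext u; exact (flow_glaw hlip h0 hD s u x).symm
  rw [heq] at h1
  exact h2.unique h1

theorem flow_inv_comp (hlip : LipschitzWith M.toNNReal v)
    (h0 : ∀ x, φ 0 x = x)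
    (hD : ∀ s x, HasDerivAt (fun r => φ r x) (v (φ s x)) s)
    (hreg : ∀ s, ContDiff ℝ 2 (φ s))
    (s : ℝ) (x : E) :
    (fderiv ℝ (φ (-s)) (φ s x)).comp (fderiv ℝ (φ s) x) = ContinuousLinearMap.id ℝ E := by
  have hcomp : HasFDerivAt (fun y => φ (-s) (φ s y))
      ((fderiv ℝ (φ (-s)) (φ s x)).comp (fderiv ℝ (φ s) x)) x :=
    HasFDerivAt.comp x (((hreg (-s)).differentiable (by norm_num) _).hasFDerivAt)
      (((hreg s).differentiable (by norm_num) x).hasFDerivAt)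
  have heq : (fun y => φ (-s) (φ s y)) = id := funext fun y => flow_inv_pt hlip h0 hD s y
  rw [heq] at hcomp
  exact hcomp.unique (hasFDerivAt_id x)

theorem flow_joint (hM : 0 ≤ M) (hb : ∀ x, ‖v x‖ ≤ M) (hlip : LipschitzWith M.toNNReal v)
    (h0 : ∀ x, φ 0 x = x)
    (hD : ∀ s x, HasDerivAt (fun r => φ r x) (v (φ s x)) s)
    (hreg : ∀ s, ContDiff ℝ 2 (φ s))
    (s : ℝ) (x : E) :
    HasFDerivAt (fun p : ℝ × E => φ p.1 p.2)
      ((fderiv ℝ (φ s) x).comp (ContinuousLinearMap.snd ℝ ℝ E) +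
        (ContinuousLinearMap.fst ℝ ℝ E).smulRight (v (φ s x))) (s, x) := by
  set D := fderiv ℝ (φ s) x with hDdef
  set c := v (φ s x) with hcdef
  have hDf : HasFDerivAt (φ s) D x := ((hreg s).differentiable (by norm_num) x).hasFDerivAt
  rw [hasFDerivAt_iff_isLittleO]
  have key : (fun p : ℝ × E => φ p.1 p.2 - φ s x -
      ((D.comp (ContinuousLinearMap.snd ℝ ℝ E) +
        (ContinuousLinearMap.fst ℝ ℝ E).smulRight c)) (p - (s, x)))
      = fun p : ℝ × E => (φ s p.2 - φ s x - D (p.2 - x)) +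
        (φ p.1 p.2 - φ s p.2 - (p.1 - s) • c) := by
    funext p
    simp only [ContinuousLinearMap.add_apply, ContinuousLinearMap.coe_comp', Function.comp_apply,
      ContinuousLinearMap.coe_snd', ContinuousLinearMap.smulRight_apply,
      ContinuousLinearMap.coe_fst', Prod.fst_sub, Prod.snd_sub]
    abel
  rw [key]
  have h1 : (fun p : ℝ × E => φ s p.2 - φ s x - D (p.2 - x)) =o[nhds (s, x)]
      fun p : ℝ × E => p - (s, x) := by
    have := (hDf.comp (s, x) (hasFDerivAt_snd (𝕜 := ℝ) (p := (s, x)))).isLittleO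
    simpa using this
  refine h1.add ?_
  rw [Asymptotics.isLittleO_iff]
  intro C hC
  have hKpos : 0 < M * (M + Real.exp (M * |s|)) + 1 := by positivity
  have hB : ∀ p : ℝ × E, ‖φ p.1 p.2 - φ s p.2 - (p.1 - s) • c‖ ≤
      (M * (M + Real.exp (M * |s|))) * (‖p - (s, x)‖ * ‖p - (s, x)‖) := by
    rintro ⟨r, y⟩
    set n := ‖(r, y) - (s, x)‖ with hn
    have hn0 : 0 ≤ n := norm_nonneg _
    have hrs : |r - s| ≤ n := by
      have := norm_fst_le ((r, y) - (s, x))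
      simp only [Prod.fst_sub, Real.norm_eq_abs] at this; exact this
    have hyx : ‖y - x‖ ≤ n := by
      have := norm_snd_le ((r, y) - (s, x))
      simp only [Prod.snd_sub] at this; exact this
    set Cst := M * (M * |r - s| + Real.exp (M * |s|) * ‖y - x‖) with hCst
    have hg : ∀ u ∈ uIcc s r, HasDerivWithinAt (fun u => φ u y - u • c)
        (v (φ u y) - c) (uIcc s r) u := by
      intro u _
      exact ((hD u y).sub (by simpa using (hasDerivAt_id u).smul_const c)).hasDerivWithinAt
    have hbound : ∀ u ∈ uIcc s r, ‖v (φ u y) - c‖ ≤ Cst := by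
      intro u hu
      have hus : |u - s| ≤ |r - s| := by
        rcases mem_uIcc.mp hu with ⟨h1', h2'⟩ | ⟨h1', h2'⟩
        · rw [abs_of_nonneg (by linarith), abs_of_nonneg (by linarith)]; linarith
        · rw [abs_of_nonpos (by linarith), abs_of_nonpos (by linarith)]; linarith
      have hlip' : ‖v (φ u y) - c‖ ≤ M * ‖φ u y - φ s x‖ := by
        have := hlip.dist_le_mul (φ u y) (φ s x)
        rwa [Real.coe_toNNReal _ hM, dist_eq_norm, dist_eq_norm] at this
      have hd1 : ‖φ u y - φ s y‖ ≤ M * |u - s| := flow_speed hD hb u s y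
      have hd2 : ‖φ s y - φ s x‖ ≤ Real.exp (M * |s|) * ‖y - x‖ := by
        have := flow_contract hM hlip h0 hD s y x
        rwa [dist_eq_norm, dist_eq_norm] at this
      have htri : ‖φ u y - φ s x‖ ≤ ‖φ u y - φ s y‖ + ‖φ s y - φ s x‖ :=
        norm_sub_le_norm_sub_add_norm_sub _ _ _
      have : ‖φ u y - φ s x‖ ≤ M * |r - s| + Real.exp (M * |s|) * ‖y - x‖ := by
        have := mul_le_mul_of_nonneg_left hus hM
        linarith
      calc ‖v (φ u y) - c‖ ≤ M * ‖φ u y - φ s x‖ := hlip'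
        _ ≤ Cst := by rw [hCst]; exact mul_le_mul_of_nonneg_left this hM
    have hmvt := Convex.norm_image_sub_le_of_norm_hasDerivWithin_le
      hg hbound (convex_uIcc s r) (left_mem_uIcc) (right_mem_uIcc)
    have heq2 : (φ r y - r • c) - (φ s y - s • c) = φ r y - φ s y - (r - s) • c := by
      rw [sub_smul]; abel
    rw [heq2, Real.norm_eq_abs] at hmvt
    have hCstle : Cst ≤ M * (M + Real.exp (M * |s|)) * n := by
      rw [hCst]
      have h1' : M * |r - s| ≤ M * n := mul_le_mul_of_nonneg_left hrs hM
      have h2' : Real.exp (M * |s|) * ‖y - x‖ ≤ Real.exp (M * |s|) * n :=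
        mul_le_mul_of_nonneg_left hyx (Real.exp_nonneg _)
      nlinarith [Real.exp_nonneg (M * |s|)]
    calc ‖φ r y - φ s y - (r - s) • c‖ ≤ Cst * |r - s| := hmvt
      _ ≤ (M * (M + Real.exp (M * |s|)) * n) * n := by
          apply mul_le_mul hCstle hrs (abs_nonneg _)
          positivity
      _ = (M * (M + Real.exp (M * |s|))) * (n * n) := by ring
  rw [Metric.eventually_nhds_iff]
  refine ⟨C / (M * (M + Real.exp (M * |s|)) + 1), by positivity, ?_⟩
  intro p hp
  have hb2 := hB p
  set n := ‖p - (s, x)‖ with hn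
  have hn0 : 0 ≤ n := norm_nonneg _
  have hdist : n < C / (M * (M + Real.exp (M * |s|)) + 1) := by
    rwa [dist_eq_norm] at hp
  set K0 := M * (M + Real.exp (M * |s|)) with hK0
  have hK00 : 0 ≤ K0 := by positivity
  have hle : K0 * (n * n) ≤ C * n := by
    have h1' : n * (K0 + 1) < C := (lt_div_iff₀ hKpos).mp hdist
    nlinarith
  calc ‖φ p.1 p.2 - φ s p.2 - (p.1 - s) • c‖ ≤ K0 * (n * n) := hb2
    _ ≤ C * n := hle



end auxiliary

section hmaplemmas

noncomputable def Lmap {d : ℕ}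
    (Φ : Fin d → ℝ → EuclideanSpace ℝ (Fin d) → EuclideanSpace ℝ (Fin d))
    (a : Fin d → EuclideanSpace ℝ (Fin d) → EuclideanSpace ℝ (Fin d))
    (x₀ t : EuclideanSpace ℝ (Fin d)) :
    ℕ → (EuclideanSpace ℝ (Fin d) →L[ℝ] EuclideanSpace ℝ (Fin d))
  | 0 => 0
  | i + 1 =>
    if h : i < d then
      (fderiv ℝ (Φ ⟨i, h⟩ (t ⟨i, h⟩)) (Hmap Φ x₀ i t)).comp
        (Lmap Φ a x₀ t i +
          (EuclideanSpace.proj (⟨i, h⟩ : Fin d)).smulRight (a ⟨i, h⟩ (Hmap Φ x₀ i t)))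
    else Lmap Φ a x₀ t i

variable {d : ℕ}
  {Φ : Fin d → ℝ → EuclideanSpace ℝ (Fin d) → EuclideanSpace ℝ (Fin d)}
  {a : Fin d → EuclideanSpace ℝ (Fin d) → EuclideanSpace ℝ (Fin d)}
  {x₀ t : EuclideanSpace ℝ (Fin d)} {M : ℝ}

theorem Hmap_zero : Hmap Φ x₀ 0 t = x₀ := rfl

theorem Hmap_succ (i : ℕ) (h : i < d) :
    Hmap Φ x₀ (i + 1) t = Φ ⟨i, h⟩ (t ⟨i, h⟩) (Hmap Φ x₀ i t) := by
  unfold Hmap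
  rw [List.range_succ, List.foldl_append]
  simp [h]

theorem Hmap_succ_of_ge (i : ℕ) (h : ¬ i < d) :
    Hmap Φ x₀ (i + 1) t = Hmap Φ x₀ i t := by
  unfold Hmap
  rw [List.range_succ, List.foldl_append]
  simp [h]

theorem Lmap_congr (i : ℕ) (v w : EuclideanSpace ℝ (Fin d))
    (hvw : ∀ j : Fin d, (j : ℕ) < i → v j = w j) :
    Lmap Φ a x₀ t i v = Lmap Φ a x₀ t i w := by
  induction i with
  | zero => simp [Lmap]
  | succ i ih =>
    have ih' := ih (fun j hj => hvw j (Nat.lt_succ_of_lt hj))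
    by_cases h : i < d
    · simp only [Lmap, dif_pos h, ContinuousLinearMap.coe_comp', Function.comp_apply,
        ContinuousLinearMap.add_apply, ContinuousLinearMap.smulRight_apply]
      have hproj : (EuclideanSpace.proj (⟨i, h⟩ : Fin d)) v
          = (EuclideanSpace.proj (⟨i, h⟩ : Fin d)) w := by
        simpa using hvw ⟨i, h⟩ (Nat.lt_succ_self i)
      rw [ih', hproj]
    · simp only [Lmap, dif_neg h]
      exact ih'

theorem Hmap_hasFDerivAt (hM : 0 ≤ M)
    (hab : ∀ i x, ‖a i x‖ ≤ M) (halip : ∀ i, LipschitzWith M.toNNReal (a i))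
    (hΦ0 : ∀ i x, Φ i 0 x = x)
    (hΦ : ∀ (i : Fin d) (s : ℝ) x, HasDerivAt (fun r => Φ i r x) (a i (Φ i s x)) s)
    (hΦreg : ∀ (i : Fin d) (s : ℝ), ContDiff ℝ 2 (Φ i s)) (i : ℕ) :
    HasFDerivAt (fun t' => Hmap Φ x₀ i t') (Lmap Φ a x₀ t i) t := by
  induction i with
  | zero => exact hasFDerivAt_const x₀ t
  | succ i ih =>
    by_cases h : i < d
    · set j : Fin d := ⟨i, h⟩
      set xi := Hmap Φ x₀ i t with hxi
      have hjoint := flow_joint hM (hab j) (halip j) (hΦ0 j) (hΦ j) (hΦreg j) (t j) xi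
      have hinner : HasFDerivAt (fun t' : EuclideanSpace ℝ (Fin d) => ((t' j : ℝ), Hmap Φ x₀ i t'))
          ((EuclideanSpace.proj j).prod (Lmap Φ a x₀ t i)) t :=
        HasFDerivAt.prodMk (ContinuousLinearMap.hasFDerivAt (EuclideanSpace.proj j : EuclideanSpace ℝ (Fin d) →L[ℝ] ℝ)) ih
      have hc := hjoint.comp t hinner
      have hfun : ((fun p : ℝ × EuclideanSpace ℝ (Fin d) => Φ j p.1 p.2) ∘
          (fun t' : EuclideanSpace ℝ (Fin d) => ((t' j : ℝ), Hmap Φ x₀ i t')))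
          = fun t' => Hmap Φ x₀ (i + 1) t' := by
        funext t'
        simp only [Function.comp_apply]
        rw [Hmap_succ i h]
      rw [hfun] at hc
      have hlin : ((fderiv ℝ (Φ j (t j)) xi).comp (ContinuousLinearMap.snd ℝ ℝ _) +
          (ContinuousLinearMap.fst ℝ ℝ _).smulRight (a j (Φ j (t j) xi))).comp
          ((EuclideanSpace.proj j).prod (Lmap Φ a x₀ t i)) = Lmap Φ a x₀ t (i + 1) := by
        apply ContinuousLinearMap.ext
        intro w
        simp only [Lmap, dif_pos h, ContinuousLinearMap.coe_comp', Function.comp_apply,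
          ContinuousLinearMap.prod_apply, ContinuousLinearMap.add_apply,
          ContinuousLinearMap.coe_snd', ContinuousLinearMap.coe_fst',
          ContinuousLinearMap.smulRight_apply]
        rw [flow_push (halip j) (hΦ0 j) (hΦ j) (hΦreg j) (t j) xi]
        rw [map_add, _root_.map_smul]
      rw [hlin] at hc
      exact hc
    · have hfun : (fun t' => Hmap Φ x₀ (i + 1) t') = fun t' => Hmap Φ x₀ i t' := by
        funext t'; exact Hmap_succ_of_ge i h
      rw [hfun]
      simpa only [Lmap, dif_neg h] using ih


end hmaplemmas

/-- under the quantitative non-degeneracy condition `ND_{ε,x₀,𝐭}`, the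
differential `dH(𝐭)` is invertible with `‖dH(𝐭)⁻¹‖ ≤ ε^{-d} (2^d - 1) e^{M|𝐭|₁}`. -/
theorem stmt_13 (d : ℕ) (hd : 1 ≤ d) (M : ℝ) (hM0 : 0 < M) (hM1 : M ≤ 1)
    (a : Fin d → EuclideanSpace ℝ (Fin d) → EuclideanSpace ℝ (Fin d))
    (ha : ∀ i, ContDiff ℝ 2 (a i))
    (haM : ∀ i x, ‖a i x‖ + ‖iteratedFDeriv ℝ 1 (a i) x‖ +
      ‖iteratedFDeriv ℝ 2 (a i) x‖ ≤ M)
    (Φ : Fin d → ℝ → EuclideanSpace ℝ (Fin d) → EuclideanSpace ℝ (Fin d))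
    (hΦ0 : ∀ i x, Φ i 0 x = x)
    (hΦ : ∀ (i : Fin d) (t : ℝ) (x : EuclideanSpace ℝ (Fin d)),
      HasDerivAt (fun s => Φ i s x) (a i (Φ i t x)) t)
    (hΦreg : ∀ (i : Fin d) (t : ℝ), ContDiff ℝ 2 (Φ i t))
    (x₀ : EuclideanSpace ℝ (Fin d)) (ε : ℝ) (hε : 0 < ε)
    (t : EuclideanSpace ℝ (Fin d))
    (hND : ∀ i : Fin d,
      ε < Metric.infDist (a i (Hmap Φ x₀ i t)) (tangentSpace Φ x₀ i t : Set _)) :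
    ∃ B : EuclideanSpace ℝ (Fin d) →L[ℝ] EuclideanSpace ℝ (Fin d),
      (∀ v, B (fderiv ℝ (Hmap Φ x₀ d) t v) = v) ∧
      (∀ v, fderiv ℝ (Hmap Φ x₀ d) t (B v) = v) ∧
      ‖B‖ ≤ ε ^ (-(d : ℝ)) * (2 ^ d - 1) * Real.exp (M * ∑ i, |t i|) := by
  classical
  have hMnn : (0:ℝ) ≤ M := hM0.le
  have hab : ∀ i x, ‖a i x‖ ≤ M := by
    intro i x
    have h := haM i x
    have h1 := norm_nonneg (iteratedFDeriv ℝ 1 (a i) x)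
    have h2 := norm_nonneg (iteratedFDeriv ℝ 2 (a i) x)
    linarith
  have hd1 : ∀ i x, ‖iteratedFDeriv ℝ 1 (a i) x‖ ≤ M := by
    intro i x
    have h := haM i x
    have h1 := norm_nonneg (a i x)
    have h2 := norm_nonneg (iteratedFDeriv ℝ 2 (a i) x)
    linarith
  have halip : ∀ i, LipschitzWith M.toNNReal (a i) := fun i => my_lip hMnn (ha i) (hd1 i)
  have hHder : ∀ i : ℕ, HasFDerivAt (Hmap Φ x₀ i) (Lmap Φ a x₀ t i) t := fun i =>
    Hmap_hasFDerivAt hMnn hab halip hΦ0 hΦ hΦreg i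
  have hfd : ∀ i : ℕ, fderiv ℝ (Hmap Φ x₀ i) t = Lmap Φ a x₀ t i := fun i => (hHder i).fderiv
  have hND' : ∀ i : Fin d, ε < Metric.infDist (a i (Hmap Φ x₀ i t))
      ((LinearMap.range (Lmap Φ a x₀ t i).toLinearMap : Submodule ℝ _) : Set _) := by
    intro i
    have h := hND i
    unfold tangentSpace at h
    rwa [hfd] at h
  -- ε is small
  have hε1 : ε ≤ 1 := by
    have h := hND' ⟨0, hd⟩
    have hr : (LinearMap.range (Lmap Φ a x₀ t ((⟨0, hd⟩ : Fin d) : ℕ)).toLinearMap : Submodule ℝ _) = ⊥ := by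
      show (LinearMap.range (Lmap Φ a x₀ t 0).toLinearMap : Submodule ℝ _) = ⊥
      rw [eq_bot_iff]
      rintro x ⟨v, rfl⟩
      simp [Lmap]
    rw [hr] at h
    have h2 : Metric.infDist (a ⟨0, hd⟩ (Hmap Φ x₀ ((⟨0, hd⟩ : Fin d) : ℕ) t))
        ((⊥ : Submodule ℝ (EuclideanSpace ℝ (Fin d))) : Set _) ≤ M := by
      rw [Submodule.bot_coe, Metric.infDist_singleton, dist_zero_right]
      exact hab _ _
    linarith
  -- inverse derivative facts
  have hDinvD : ∀ (i : ℕ) (h : i < d),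
      (fderiv ℝ (Φ ⟨i,h⟩ (-(t ⟨i,h⟩))) (Hmap Φ x₀ (i+1) t)).comp
        (fderiv ℝ (Φ ⟨i,h⟩ (t ⟨i,h⟩)) (Hmap Φ x₀ i t)) = ContinuousLinearMap.id ℝ _ := by
    intro i h
    have h1 := flow_inv_comp (halip ⟨i,h⟩) (hΦ0 ⟨i,h⟩) (hΦ ⟨i,h⟩) (hΦreg ⟨i,h⟩)
      (t ⟨i,h⟩) (Hmap Φ x₀ i t)
    rw [Hmap_succ i h]
    exact h1
  have hDDinv : ∀ (i : ℕ) (h : i < d),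
      (fderiv ℝ (Φ ⟨i,h⟩ (t ⟨i,h⟩)) (Hmap Φ x₀ i t)).comp
        (fderiv ℝ (Φ ⟨i,h⟩ (-(t ⟨i,h⟩))) (Hmap Φ x₀ (i+1) t)) = ContinuousLinearMap.id ℝ _ := by
    intro i h
    have h2 := flow_inv_comp (halip ⟨i,h⟩) (hΦ0 ⟨i,h⟩) (hΦ ⟨i,h⟩) (hΦreg ⟨i,h⟩)
      (-(t ⟨i,h⟩)) (Hmap Φ x₀ (i+1) t)
    rw [neg_neg] at h2
    have h3 : Φ ⟨i,h⟩ (-(t ⟨i,h⟩)) (Hmap Φ x₀ (i+1) t) = Hmap Φ x₀ i t := by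
      rw [Hmap_succ i h]
      exact flow_inv_pt (halip ⟨i,h⟩) (hΦ0 ⟨i,h⟩) (hΦ ⟨i,h⟩) (t ⟨i,h⟩) _
    rwa [h3] at h2
  have hDinj : ∀ (i : ℕ) (h : i < d),
      Function.Injective (fderiv ℝ (Φ ⟨i,h⟩ (t ⟨i,h⟩)) (Hmap Φ x₀ i t)) := by
    intro i h x y hxy
    have hx := ContinuousLinearMap.ext_iff.mp (hDinvD i h) x
    have hy := ContinuousLinearMap.ext_iff.mp (hDinvD i h) y
    simp only [ContinuousLinearMap.coe_comp', Function.comp_apply,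
      ContinuousLinearMap.coe_id', id_eq] at hx hy
    rw [← hx, ← hy, hxy]
  -- range recursion
  have hrange : ∀ (i : ℕ) (h : i < d),
      LinearMap.range (Lmap Φ a x₀ t (i+1)).toLinearMap =
        Submodule.map (fderiv ℝ (Φ ⟨i,h⟩ (t ⟨i,h⟩)) (Hmap Φ x₀ i t)).toLinearMap
          (LinearMap.range (Lmap Φ a x₀ t i).toLinearMap ⊔
            Submodule.span ℝ {a ⟨i,h⟩ (Hmap Φ x₀ i t)}) := by
    intro i h
    apply le_antisymm
    · rintro w ⟨v, rfl⟩
      refine ⟨Lmap Φ a x₀ t i v + (v ⟨i,h⟩) • a ⟨i,h⟩ (Hmap Φ x₀ i t), ?_, ?_⟩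
      · exact Submodule.add_mem_sup (LinearMap.mem_range_self _ v)
          (Submodule.smul_mem _ _ (Submodule.mem_span_singleton_self _))
      · simp only [Lmap, dif_pos h, ContinuousLinearMap.coe_comp', Function.comp_apply,
          ContinuousLinearMap.add_apply, ContinuousLinearMap.smulRight_apply]
        rfl
    · rintro w hw
      rcases Submodule.mem_map.mp hw with ⟨z, hz, rfl⟩
      rcases Submodule.mem_sup.mp hz with ⟨u, ⟨v₀, rfl⟩, z', hz', rfl⟩
      rcases Submodule.mem_span_singleton.mp hz' with ⟨c, rfl⟩
      refine ⟨v₀ + EuclideanSpace.single (⟨i,h⟩ : Fin d) (c - v₀ ⟨i,h⟩), ?_⟩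
      simp only [Lmap, dif_pos h, ContinuousLinearMap.coe_coe, ContinuousLinearMap.coe_comp', Function.comp_apply,
        ContinuousLinearMap.add_apply, ContinuousLinearMap.smulRight_apply]
      have h1 : Lmap Φ a x₀ t i (v₀ + EuclideanSpace.single (⟨i,h⟩ : Fin d) (c - v₀ ⟨i,h⟩)) =
          Lmap Φ a x₀ t i v₀ := by
        apply Lmap_congr
        intro k hk
        have hne : k ≠ ⟨i, h⟩ := by
          intro he
          rw [he] at hk
          exact lt_irrefl i hk
        simp [PiLp.add_apply, EuclideanSpace.single_apply, hne]
      rw [h1]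
      congr 1
      have h2 : (EuclideanSpace.proj (⟨i,h⟩ : Fin d))
          (v₀ + EuclideanSpace.single (⟨i,h⟩ : Fin d) (c - v₀ ⟨i,h⟩)) = c := by
        simp [PiLp.add_apply, EuclideanSpace.single_apply]
      rw [h2]
  -- a i is not in the tangent space
  have hnotmem : ∀ (i : ℕ) (h : i < d),
      a ⟨i,h⟩ (Hmap Φ x₀ i t) ∉ LinearMap.range (Lmap Φ a x₀ t i).toLinearMap := by
    intro i h hmem
    have h0 := hND' ⟨i, h⟩
    rw [Metric.infDist_zero_of_mem (SetLike.mem_coe.mpr hmem)] at h0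
    linarith
  -- dimension count
  have hdim : ∀ i : ℕ, i ≤ d →
      (i : ℕ) ≤ Module.finrank ℝ (LinearMap.range (Lmap Φ a x₀ t i).toLinearMap) := by
    intro i
    induction i with
    | zero => intro _; exact Nat.zero_le _
    | succ i ih =>
      intro hi
      have h : i < d := hi
      have hlt : LinearMap.range (Lmap Φ a x₀ t i).toLinearMap <
          LinearMap.range (Lmap Φ a x₀ t i).toLinearMap ⊔
            Submodule.span ℝ {a ⟨i,h⟩ (Hmap Φ x₀ i t)} := by
        refine lt_of_le_of_ne le_sup_left ?_
        intro heq
        apply hnotmem i h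
        rw [heq]
        exact Submodule.mem_sup_right (Submodule.mem_span_singleton_self _)
      have hfr := Submodule.finrank_lt_finrank_of_lt hlt
      have hmapeq : Module.finrank ℝ
          (Submodule.map (fderiv ℝ (Φ ⟨i,h⟩ (t ⟨i,h⟩)) (Hmap Φ x₀ i t)).toLinearMap
            (LinearMap.range (Lmap Φ a x₀ t i).toLinearMap ⊔
              Submodule.span ℝ {a ⟨i,h⟩ (Hmap Φ x₀ i t)})) =
          Module.finrank ℝ ↥(LinearMap.range (Lmap Φ a x₀ t i).toLinearMap ⊔
              Submodule.span ℝ {a ⟨i,h⟩ (Hmap Φ x₀ i t)}) :=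
        (Submodule.equivMapOfInjective _ (hDinj i h) _).symm.finrank_eq
      rw [hrange i h, hmapeq]
      have := ih (le_of_lt h)
      omega
  have htop : LinearMap.range (Lmap Φ a x₀ t d).toLinearMap = ⊤ := by
    apply Submodule.eq_top_of_finrank_eq
    have h1 := hdim d le_rfl
    have h2 : Module.finrank ℝ (LinearMap.range (Lmap Φ a x₀ t d).toLinearMap) ≤
        Module.finrank ℝ (EuclideanSpace ℝ (Fin d)) := Submodule.finrank_le _
    rw [finrank_euclideanSpace_fin] at h2 ⊢
    omega
  -- quantitative inverse bound
  have hεinv1 : (1:ℝ) ≤ ε⁻¹ := one_le_inv_iff₀.mpr ⟨hε, hε1⟩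
  have hS : ∀ i : ℕ, i ≤ d → ∀ w : EuclideanSpace ℝ (Fin d),
      w ∈ LinearMap.range (Lmap Φ a x₀ t i).toLinearMap → ∃ v : EuclideanSpace ℝ (Fin d),
        (∀ j : Fin d, i ≤ (j:ℕ) → v j = 0) ∧ Lmap Φ a x₀ t i v = w ∧
        ∑ j, |v j| ≤ (2 ^ i - 1) * (ε ^ i)⁻¹ *
          Real.exp (M * ∑ j ∈ Finset.univ.filter (fun j : Fin d => (j:ℕ) < i), |t j|) * ‖w‖ := by
    intro i
    induction i with
    | zero =>
      intro _ w hw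
      obtain ⟨v, rfl⟩ := hw
      refine ⟨0, fun j _ => rfl, ?_, ?_⟩
      · simp [Lmap]
      · simp [Lmap]
    | succ i ih =>
      intro hi w hw
      have h : i < d := hi
      obtain ⟨v₀, rfl⟩ := hw
      have hw_eq : Lmap Φ a x₀ t (i+1) v₀ =
          (fderiv ℝ (Φ ⟨i,h⟩ (t ⟨i,h⟩)) (Hmap Φ x₀ i t))
            (Lmap Φ a x₀ t i v₀ + (v₀ ⟨i,h⟩) • a ⟨i,h⟩ (Hmap Φ x₀ i t)) := by
        simp only [Lmap, dif_pos h, ContinuousLinearMap.coe_comp', Function.comp_apply,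
          ContinuousLinearMap.add_apply, ContinuousLinearMap.smulRight_apply]
        rfl
      set z : EuclideanSpace ℝ (Fin d) :=
        Lmap Φ a x₀ t i v₀ + (v₀ ⟨i,h⟩) • a ⟨i,h⟩ (Hmap Φ x₀ i t) with hzdef
      -- norm of z
      have hzn : ‖z‖ ≤ Real.exp (M * |t ⟨i,h⟩|) * ‖Lmap Φ a x₀ t (i+1) v₀‖ := by
        have h1 : z = (fderiv ℝ (Φ ⟨i,h⟩ (-(t ⟨i,h⟩))) (Hmap Φ x₀ (i+1) t))
            (Lmap Φ a x₀ t (i+1) v₀) := by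
          rw [hw_eq]
          have := ContinuousLinearMap.ext_iff.mp (hDinvD i h) z
          simp only [ContinuousLinearMap.coe_comp', Function.comp_apply,
            ContinuousLinearMap.coe_id', id_eq] at this
          rw [this]
        rw [h1]
        calc ‖(fderiv ℝ (Φ ⟨i,h⟩ (-(t ⟨i,h⟩))) (Hmap Φ x₀ (i+1) t))
              (Lmap Φ a x₀ t (i+1) v₀)‖
            ≤ ‖fderiv ℝ (Φ ⟨i,h⟩ (-(t ⟨i,h⟩))) (Hmap Φ x₀ (i+1) t)‖ *
              ‖Lmap Φ a x₀ t (i+1) v₀‖ := ContinuousLinearMap.le_opNorm _ _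
          _ ≤ Real.exp (M * |t ⟨i,h⟩|) * ‖Lmap Φ a x₀ t (i+1) v₀‖ := by
              apply mul_le_mul_of_nonneg_right _ (norm_nonneg _)
              have := flow_fderiv_le hMnn (halip ⟨i,h⟩) (hΦ0 ⟨i,h⟩) (hΦ ⟨i,h⟩)
                (hΦreg ⟨i,h⟩) (-(t ⟨i,h⟩)) (Hmap Φ x₀ (i+1) t)
              rwa [abs_neg] at this
      -- coefficient bound
      have hcb : |v₀ ⟨i,h⟩| * ε ≤ ‖z‖ := by
        rcases eq_or_ne (v₀ ⟨i,h⟩) 0 with hc0 | hc0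
        · rw [hc0]
          simp [norm_nonneg]
        · have hmem : -((v₀ ⟨i,h⟩)⁻¹) • Lmap Φ a x₀ t i v₀ ∈
              LinearMap.range (Lmap Φ a x₀ t i).toLinearMap :=
            Submodule.smul_mem _ _ (LinearMap.mem_range_self _ v₀)
          have hdist := Metric.infDist_le_dist_of_mem
            (x := a ⟨i,h⟩ (Hmap Φ x₀ i t)) (SetLike.mem_coe.mpr hmem)
          have hε' : ε ≤ dist (a ⟨i,h⟩ (Hmap Φ x₀ i t))
              (-((v₀ ⟨i,h⟩)⁻¹) • Lmap Φ a x₀ t i v₀) := le_trans (hND' ⟨i,h⟩).le hdist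
          have hde : dist (a ⟨i,h⟩ (Hmap Φ x₀ i t))
              (-((v₀ ⟨i,h⟩)⁻¹) • Lmap Φ a x₀ t i v₀) =
              ‖a ⟨i,h⟩ (Hmap Φ x₀ i t) + (v₀ ⟨i,h⟩)⁻¹ • Lmap Φ a x₀ t i v₀‖ := by
            rw [dist_eq_norm, neg_smul, sub_neg_eq_add]
          have hkey : ‖z‖ = |v₀ ⟨i,h⟩| *
              ‖a ⟨i,h⟩ (Hmap Φ x₀ i t) + (v₀ ⟨i,h⟩)⁻¹ • Lmap Φ a x₀ t i v₀‖ := by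
            rw [hzdef, show Lmap Φ a x₀ t i v₀ + v₀ ⟨i,h⟩ • a ⟨i,h⟩ (Hmap Φ x₀ i t) =
              (v₀ ⟨i,h⟩) • (a ⟨i,h⟩ (Hmap Φ x₀ i t) + (v₀ ⟨i,h⟩)⁻¹ • Lmap Φ a x₀ t i v₀) by
                rw [smul_add, smul_smul, mul_inv_cancel₀ hc0, one_smul]
                abel]
            rw [norm_smul, Real.norm_eq_abs]
          rw [hde] at hε'
          rw [hkey]
          exact mul_le_mul_of_nonneg_left hε' (abs_nonneg _)
      -- coefficient bound, divided form
      have hcb' : |v₀ ⟨i,h⟩| ≤ ε⁻¹ * ‖z‖ := by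
        rw [inv_mul_eq_div, le_div_iff₀ hε]
        exact hcb
      have hun : ‖Lmap Φ a x₀ t i v₀‖ ≤ 2 * ε⁻¹ * ‖z‖ := by
        have h1 : ‖Lmap Φ a x₀ t i v₀‖ ≤ ‖z‖ + |v₀ ⟨i,h⟩| * M := by
          have h2 : Lmap Φ a x₀ t i v₀ = z - (v₀ ⟨i,h⟩) • a ⟨i,h⟩ (Hmap Φ x₀ i t) := by
            rw [hzdef]; abel
          rw [h2]
          calc ‖z - (v₀ ⟨i,h⟩) • a ⟨i,h⟩ (Hmap Φ x₀ i t)‖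
              ≤ ‖z‖ + ‖(v₀ ⟨i,h⟩) • a ⟨i,h⟩ (Hmap Φ x₀ i t)‖ := norm_sub_le _ _
            _ ≤ ‖z‖ + |v₀ ⟨i,h⟩| * M := by
                rw [norm_smul, Real.norm_eq_abs]
                exact add_le_add_right (mul_le_mul_of_nonneg_left (hab _ _) (abs_nonneg _)) _
        have h3 : |v₀ ⟨i,h⟩| * M ≤ ε⁻¹ * ‖z‖ := by
          calc |v₀ ⟨i,h⟩| * M ≤ (ε⁻¹ * ‖z‖) * M := mul_le_mul_of_nonneg_right hcb' hMnn
            _ ≤ (ε⁻¹ * ‖z‖) * 1 := mul_le_mul_of_nonneg_left hM1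
                (mul_nonneg (inv_nonneg.mpr hε.le) (norm_nonneg _))
            _ = ε⁻¹ * ‖z‖ := mul_one _
        have h4 : ‖z‖ ≤ ε⁻¹ * ‖z‖ := le_mul_of_one_le_left (norm_nonneg _) hεinv1
        linarith
      obtain ⟨v', hv'0, hv'w, hsum'⟩ := ih h.le (Lmap Φ a x₀ t i v₀)
        (LinearMap.mem_range_self _ v₀)
      refine ⟨v' + EuclideanSpace.single (⟨i,h⟩ : Fin d) (v₀ ⟨i,h⟩), ?_, ?_, ?_⟩
      · intro k hk
        have hne : k ≠ ⟨i,h⟩ := by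
          intro he; rw [he] at hk; simp at hk
        have h5 : v' k = 0 := hv'0 k (by omega)
        simp [PiLp.add_apply, EuclideanSpace.single_apply, hne, h5]
      · have h1 : Lmap Φ a x₀ t i (v' + EuclideanSpace.single (⟨i,h⟩ : Fin d) (v₀ ⟨i,h⟩)) =
            Lmap Φ a x₀ t i v' := by
          apply Lmap_congr
          intro k hk
          have hne : k ≠ ⟨i,h⟩ := by
            intro he; rw [he] at hk; simp at hk
          simp [PiLp.add_apply, EuclideanSpace.single_apply, hne]
        rw [ContinuousLinearMap.coe_coe, hw_eq]
        simp only [Lmap, dif_pos h, ContinuousLinearMap.coe_comp', Function.comp_apply,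
          ContinuousLinearMap.add_apply, ContinuousLinearMap.smulRight_apply]
        rw [h1, hv'w]
        have h2 : (EuclideanSpace.proj (⟨i,h⟩ : Fin d))
            (v' + EuclideanSpace.single (⟨i,h⟩ : Fin d) (v₀ ⟨i,h⟩)) = v₀ ⟨i,h⟩ := by
          have h3 : v' (⟨i,h⟩ : Fin d) = 0 := hv'0 (⟨i,h⟩ : Fin d) (by simp)
          simp [PiLp.add_apply, EuclideanSpace.single_apply, h3]
        rw [h2]
      · set Ei := Real.exp (M * ∑ j ∈ Finset.univ.filter (fun j : Fin d => (j:ℕ) < i), |t j|)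
          with hEidef
        have hsumv : ∑ k, |(v' + EuclideanSpace.single (⟨i,h⟩ : Fin d) (v₀ ⟨i,h⟩)) k| ≤
            (∑ k, |v' k|) + |v₀ ⟨i,h⟩| := by
          have h1 : ∀ k : Fin d, |(v' + EuclideanSpace.single (⟨i,h⟩ : Fin d) (v₀ ⟨i,h⟩)) k| ≤
              |v' k| + |EuclideanSpace.single (⟨i,h⟩ : Fin d) (v₀ ⟨i,h⟩) k| := by
            intro k
            rw [PiLp.add_apply]
            exact abs_add_le _ _
          have h2 : ∀ k : Fin d, |EuclideanSpace.single (⟨i,h⟩ : Fin d) (v₀ ⟨i,h⟩) k| =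
              if k = ⟨i,h⟩ then |v₀ ⟨i,h⟩| else 0 := by
            intro k
            rw [EuclideanSpace.single_apply]
            split <;> simp
          calc ∑ k, |(v' + EuclideanSpace.single (⟨i,h⟩ : Fin d) (v₀ ⟨i,h⟩)) k|
              ≤ ∑ k, (|v' k| + |EuclideanSpace.single (⟨i,h⟩ : Fin d) (v₀ ⟨i,h⟩) k|) :=
                Finset.sum_le_sum (fun k _ => h1 k)
            _ = (∑ k, |v' k|) + ∑ k, |EuclideanSpace.single (⟨i,h⟩ : Fin d) (v₀ ⟨i,h⟩) k| :=
                Finset.sum_add_distrib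
            _ = (∑ k, |v' k|) + |v₀ ⟨i,h⟩| := by
                congr 1
                rw [Finset.sum_congr rfl (fun k _ => h2 k),
                  Finset.sum_ite_eq' Finset.univ (⟨i,h⟩ : Fin d)]
                simp
        have hset : Finset.univ.filter (fun k : Fin d => (k:ℕ) < i + 1) =
            insert (⟨i,h⟩ : Fin d) (Finset.univ.filter (fun k : Fin d => (k:ℕ) < i)) := by
          ext k
          simp only [Finset.mem_filter, Finset.mem_univ, true_and, Finset.mem_insert]
          constructor
          · intro hk
            rcases Nat.lt_succ_iff_lt_or_eq.mp hk with hk' | hk'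
            · exact Or.inr hk'
            · exact Or.inl (Fin.ext hk')
          · rintro (rfl | hk)
            · exact Nat.lt_succ_self i
            · exact Nat.lt_succ_of_lt hk
        have hnotin : (⟨i,h⟩ : Fin d) ∉ Finset.univ.filter (fun k : Fin d => (k:ℕ) < i) := by
          simp
        have hEsplit : Real.exp (M * ∑ j ∈ Finset.univ.filter
              (fun j : Fin d => (j:ℕ) < i+1), |t j|) = Ei * Real.exp (M * |t ⟨i,h⟩|) := by
          rw [hset, Finset.sum_insert hnotin, mul_add, Real.exp_add, hEidef, mul_comm]
        have hEi1 : (1:ℝ) ≤ Ei := Real.one_le_exp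
          (mul_nonneg hMnn (Finset.sum_nonneg fun j _ => abs_nonneg _))
        have h2i : (1:ℝ) ≤ 2^i := one_le_pow₀ one_le_two
        have h2i1 : (1:ℝ) ≤ 2^(i+1) := one_le_pow₀ one_le_two
        have hεpow : (0:ℝ) < ε ^ i := pow_pos hε i
        have hεpow1 : (0:ℝ) < ε ^ (i+1) := pow_pos hε (i+1)
        have hεile : ε⁻¹ ≤ (ε^(i+1))⁻¹ := by
          have h5 : ε^(i+1) ≤ ε := by
            calc ε^(i+1) = ε^i * ε := pow_succ ε i
              _ ≤ 1 * ε := mul_le_mul_of_nonneg_right (pow_le_one₀ hε.le hε1) hε.le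
              _ = ε := one_mul ε
          exact (inv_le_inv₀ hε hεpow1).mpr h5
        have hA : (0:ℝ) ≤ (2^i - 1) * (ε^i)⁻¹ * Ei :=
          mul_nonneg (mul_nonneg (by linarith) (inv_nonneg.mpr hεpow.le)) (by linarith)
        have hz0 : (0:ℝ) ≤ ‖z‖ := norm_nonneg _
        calc ∑ k, |(v' + EuclideanSpace.single (⟨i,h⟩ : Fin d) (v₀ ⟨i,h⟩)) k|
            ≤ (∑ k, |v' k|) + |v₀ ⟨i,h⟩| := hsumv
          _ ≤ (2^i - 1) * (ε^i)⁻¹ * Ei * ‖Lmap Φ a x₀ t i v₀‖ + ε⁻¹ * ‖z‖ :=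
              add_le_add hsum' hcb'
          _ ≤ (2^i - 1) * (ε^i)⁻¹ * Ei * (2 * ε⁻¹ * ‖z‖) + ε⁻¹ * ‖z‖ :=
              add_le_add_left (mul_le_mul_of_nonneg_left hun hA) _
          _ = 2*(2^i - 1) * (ε^(i+1))⁻¹ * Ei * ‖z‖ + ε⁻¹ * ‖z‖ := by
              rw [pow_succ, mul_inv]
              ring
          _ ≤ 2*(2^i - 1) * (ε^(i+1))⁻¹ * Ei * ‖z‖ + ((ε^(i+1))⁻¹ * Ei) * ‖z‖ := by
              apply add_le_add_right
              apply mul_le_mul_of_nonneg_right _ hz0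
              calc ε⁻¹ ≤ (ε^(i+1))⁻¹ := hεile
                _ ≤ (ε^(i+1))⁻¹ * Ei := le_mul_of_one_le_right (inv_nonneg.mpr hεpow1.le) hEi1
          _ = (2^(i+1) - 1) * (ε^(i+1))⁻¹ * Ei * ‖z‖ := by
              rw [pow_succ]
              ring
          _ ≤ (2^(i+1) - 1) * (ε^(i+1))⁻¹ * Ei *
              (Real.exp (M * |t ⟨i,h⟩|) * ‖Lmap Φ a x₀ t (i+1) v₀‖) := by
              apply mul_le_mul_of_nonneg_left hzn
              exact mul_nonneg (mul_nonneg (by linarith) (inv_nonneg.mpr hεpow1.le)) (by linarith)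
          _ = (2^(i+1) - 1) * (ε^(i+1))⁻¹ *
              Real.exp (M * ∑ j ∈ Finset.univ.filter (fun j : Fin d => (j:ℕ) < i+1), |t j|) *
              ‖Lmap Φ a x₀ t (i+1) v₀‖ := by
              rw [hEsplit]
              ring
  -- construct the inverse B
  have hsurjL : Function.Surjective ((Lmap Φ a x₀ t d :
      EuclideanSpace ℝ (Fin d) →L[ℝ] EuclideanSpace ℝ (Fin d)) :
      EuclideanSpace ℝ (Fin d) →ₗ[ℝ] EuclideanSpace ℝ (Fin d)) := by
    intro w
    have hw : w ∈ LinearMap.range (Lmap Φ a x₀ t d).toLinearMap := by rw [htop]; trivial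
    obtain ⟨y, hy⟩ := hw
    exact ⟨y, hy⟩
  have hinjL := LinearMap.injective_iff_surjective.mpr hsurjL
  set e := LinearEquiv.ofBijective _ ⟨hinjL, hsurjL⟩ with hedef
  refine ⟨LinearMap.toContinuousLinearMap (e.symm :
    EuclideanSpace ℝ (Fin d) →ₗ[ℝ] EuclideanSpace ℝ (Fin d)), ?_, ?_, ?_⟩
  · intro v
    rw [hfd d]
    have h1 := e.symm_apply_apply v
    exact h1
  · intro v
    rw [hfd d]
    have h1 := e.apply_symm_apply v
    exact h1
  · apply ContinuousLinearMap.opNorm_le_bound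
    · have h1 : (1:ℝ) ≤ 2^d := one_le_pow₀ one_le_two
      have h2 : (0:ℝ) ≤ ε ^ (-(d:ℝ)) := Real.rpow_nonneg hε.le _
      exact mul_nonneg (mul_nonneg h2 (by linarith)) (Real.exp_nonneg _)
    · intro w
      obtain ⟨v, hv0, hvw, hsum⟩ := hS d le_rfl w (by rw [htop]; trivial)
      have hBw : LinearMap.toContinuousLinearMap (e.symm :
          EuclideanSpace ℝ (Fin d) →ₗ[ℝ] EuclideanSpace ℝ (Fin d)) w = v := by
        have h1 : e v = w := hvw
        simp only [LinearMap.coe_toContinuousLinearMap']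
        rw [← h1]
        exact e.symm_apply_apply v
      rw [hBw]
      have hl1 : ‖v‖ ≤ ∑ j, |v j| := by
        rw [EuclideanSpace.norm_eq]
        have h1 : ∑ j, ‖v j‖ ^ 2 ≤ (∑ j, ‖v j‖) ^ 2 :=
          Finset.sum_sq_le_sq_sum_of_nonneg (fun j _ => norm_nonneg _)
        calc Real.sqrt (∑ j, ‖v j‖ ^ 2) ≤ Real.sqrt ((∑ j, ‖v j‖)^2) := Real.sqrt_le_sqrt h1
          _ = ∑ j, ‖v j‖ := Real.sqrt_sq (Finset.sum_nonneg fun j _ => norm_nonneg _)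
          _ = ∑ j, |v j| := by simp [Real.norm_eq_abs]
      have hfilter : Finset.univ.filter (fun j : Fin d => (j:ℕ) < d) = Finset.univ :=
        Finset.filter_true_of_mem (fun j _ => j.isLt)
      have hconst : (2^d - 1 : ℝ) * (ε^d)⁻¹ *
          Real.exp (M * ∑ j ∈ Finset.univ.filter (fun j : Fin d => (j:ℕ) < d), |t j|) =
          ε ^ (-(d:ℝ)) * (2^d - 1) * Real.exp (M * ∑ i, |t i|) := by
        rw [hfilter, ← Real.rpow_natCast ε d, ← Real.rpow_neg hε.le]
        ring
      calc ‖v‖ ≤ ∑ j, |v j| := hl1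
        _ ≤ (2^d - 1) * (ε^d)⁻¹ *
            Real.exp (M * ∑ j ∈ Finset.univ.filter (fun j : Fin d => (j:ℕ) < d), |t j|) *
            ‖w‖ := hsum
        _ = ε ^ (-(d:ℝ)) * (2^d - 1) * Real.exp (M * ∑ i, |t i|) * ‖w‖ := by rw [hconst]
end
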